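/- arXiv:math/0507281 — 7 statements merged into one kernel-verified Lean document; each statement's English description precedes it below -/
import Mathlib

section
/- Let n ≥ 4 be an integer and let r_1, …, r_n be real numbers with 0 < r_i < π for all i. Then Σ_{k=1}^∞ (sin(k r_1)⋯sin(k r_n))/k^{n−2} ≥ 0. -/
/-! Write `F_m(r; x) = ∑ₖ (∏ᵢ sin (k rᵢ)) cos (k x) / k^m`. Since
`sin (k a) sin (k b) = (cos (k (a - b)) - cos (k (a + b))) / 2`, the series equals
`(F_{n-2}(r'; a - b) - F_{n-2}(r'; a + b)) / 2`, where `a, b` are the last two side lengths and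
`r'` the others. As `F_m(r; ·)` is even and `2π`-periodic, it is enough that it decreases on
`[0, π]`. For `m = 2` the Bernoulli-polynomial formula for `∑ cos (k u) / k²` makes `F_2` piecewise
quadratic and explicitly decreasing. In general `F_{m+1}(r, c; x) = ½ ∫_{x-c}^{x+c} F_m(r; t) dt`,
and sliding this window to the right replaces values `F_m(r; t)` by `F_m(r; t + 2c) ≤ F_m(r; t)`. -/

open Real Finset

lemma Function.Even.apply_abs {α β : Type*} [AddGroup α] [LinearOrder α] {f : α → β}
    (hf : f.Even) (x : α) : f |x| = f x := by
  rcases abs_choice x with h | h <;> rw [h]; exact hf x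

section EvenPeriodic

variable {G : ℝ → ℝ}

lemma Function.Even.apply_two_pi_sub (heven : G.Even) (hper : G.Periodic (2 * π)) (x : ℝ) :
    G (2 * π - x) = G x := by
  rw [← heven, neg_sub, hper.sub_eq]

lemma le_of_abs_le_of_abs_le_two_pi_sub (heven : G.Even) (hper : G.Periodic (2 * π))
    (hG : AntitoneOn G (Set.Icc 0 π)) {s t : ℝ} (hs : |t| ≤ s) (hs' : |t| ≤ 2 * π - s) :
    G s ≤ G t := by
  have ht : |t| ∈ Set.Icc 0 π := ⟨abs_nonneg t, by linarith⟩
  rw [← heven.apply_abs t]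
  rcases le_total s π with h | h
  · exact hG ht ⟨(abs_nonneg t).trans hs, h⟩ hs
  · rw [← heven.apply_two_pi_sub hper]
    exact hG ht ⟨by linarith [abs_nonneg t], by linarith⟩ hs'

lemma antitoneOn_integral_sub_add (hcont : Continuous G) (heven : G.Even)
    (hper : G.Periodic (2 * π)) (hG : AntitoneOn G (Set.Icc 0 π)) {c : ℝ}
    (hc : c ∈ Set.Icc 0 π) :
    AntitoneOn (fun x => ∫ t in x - c..x + c, G t) (Set.Icc 0 π) := by
  intro x hx y hy hxy
  have hint : ∀ a b : ℝ, IntervalIntegrable G MeasureTheory.volume a b :=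
    hcont.intervalIntegrable
  -- moving the window from `x` to `y` trades `G t` for `G (t + 2c)`, `t ∈ [x - c, y - c]`
  have hslide : ∫ t in x - c..y - c, G (t + 2 * c) ≤ ∫ t in x - c..y - c, G t := by
    refine intervalIntegral.integral_mono_on (by linarith)
      ((hcont.comp (continuous_add_const _)).intervalIntegrable _ _) (hint _ _) ?_
    intro t ht
    apply le_of_abs_le_of_abs_le_two_pi_sub heven hper hG <;>
      rcases abs_cases t with ⟨h, _⟩ | ⟨h, _⟩ <;> rw [h] <;>
      linarith [ht.1, ht.2, hx.1, hy.2, hc.1, hc.2]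
  rw [intervalIntegral.integral_comp_add_right, show x - c + 2 * c = x + c by ring,
    show y - c + 2 * c = y + c by ring] at hslide
  have := intervalIntegral.integral_interval_sub_interval_comm' (hint (y - c) (y + c))
    (hint (x - c) (x + c)) (hint (y - c) (x - c))
  simp only
  linarith

end EvenPeriodic

noncomputable def cosSeries (a : ℕ → ℝ) (x : ℝ) : ℝ := ∑' k : ℕ, a k * cos ((k + 1) * x)

namespace cosSeries

variable (a : ℕ → ℝ)

lemma even : (cosSeries a).Even := fun x => by
  simp only [cosSeries, mul_neg, cos_neg]

lemma periodic : (cosSeries a).Periodic (2 * π) := fun x => by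
  refine tsum_congr fun k => ?_
  rw [show ((k : ℝ) + 1) * (x + 2 * π) = (k + 1) * x + ((k + 1 : ℕ) : ℝ) * (2 * π) by
    push_cast; ring, cos_add_nat_mul_two_pi]

variable {a}

lemma summable_mul_cos (ha : Summable a) (x : ℝ) :
    Summable fun k : ℕ => a k * cos ((k + 1) * x) :=
  .of_norm_bounded ha.abs fun k => by
    simpa [abs_mul] using mul_le_of_le_one_right (abs_nonneg (a k)) (abs_cos_le_one _)

lemma continuous (ha : Summable a) : Continuous (cosSeries a) :=
  continuous_tsum (fun k => by fun_prop) ha.abs fun k x => by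
    simpa [abs_mul] using mul_le_of_le_one_right (abs_nonneg (a k)) (abs_cos_le_one _)

lemma mul_cos (ha : Summable a) (w x : ℝ) :
    cosSeries (fun k => a k * cos ((k + 1) * w)) x
      = (cosSeries a (x + w) + cosSeries a (x - w)) / 2 := by
  rw [cosSeries, cosSeries, cosSeries, ← (summable_mul_cos ha _).tsum_add (summable_mul_cos ha _),
    ← tsum_div_const]
  refine tsum_congr fun k => ?_
  rw [mul_add, mul_sub, cos_add, cos_sub]
  ring

lemma tsum_mul_sin_mul_sin (ha : Summable a) (b c : ℝ) :
    ∑' k : ℕ, a k * sin ((k + 1) * b) * sin ((k + 1) * c)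
      = (cosSeries a (b - c) - cosSeries a (b + c)) / 2 := by
  rw [cosSeries, cosSeries, ← (summable_mul_cos ha _).tsum_sub (summable_mul_cos ha _),
    ← tsum_div_const]
  refine tsum_congr fun k => ?_
  rw [mul_add, mul_sub, cos_add, cos_sub]
  ring

lemma integral_sub_add (ha : Summable a) (x c : ℝ) :
    ∫ t in x - c..x + c, cosSeries a t
      = 2 * cosSeries (fun k => a k * sin ((k + 1) * c) / (k + 1)) x := by
  have hsum := intervalIntegral.hasSum_integral_of_dominated_convergence (a := x - c) (b := x + c)
    (μ := MeasureTheory.volume) (f := cosSeries a) (F := fun (k : ℕ) t => a k * cos ((k + 1) * t))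
    (fun k _ => |a k|) (fun k => by fun_prop)
    (fun k => MeasureTheory.ae_of_all _ fun t _ => by
      simpa [abs_mul] using mul_le_of_le_one_right (abs_nonneg (a k)) (abs_cos_le_one _))
    (MeasureTheory.ae_of_all _ fun _ _ => ha.abs) intervalIntegrable_const
    (MeasureTheory.ae_of_all _ fun t _ => (summable_mul_cos ha t).hasSum)
  rw [← hsum.tsum_eq, cosSeries, ← tsum_mul_left]
  refine tsum_congr fun k => ?_
  have hk : (k : ℝ) + 1 ≠ 0 := by positivity
  rw [intervalIntegral.integral_const_mul,
    intervalIntegral.integral_comp_mul_left (fun t => cos t) hk,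
    integral_cos, smul_eq_mul, mul_add (_ + 1 : ℝ), mul_sub (_ + 1 : ℝ), sin_add, sin_sub]
  field_simp
  ring

end cosSeries

lemma summable_one_div_succ_sq : Summable fun k : ℕ => 1 / ((k : ℝ) + 1) ^ 2 := by
  simpa using (summable_nat_add_iff 1).2 (Real.summable_one_div_nat_pow.2 one_lt_two)

lemma cosSeries_one_div_sq {u : ℝ} (hu : |u| ≤ 2 * π) :
    cosSeries (fun k => 1 / ((k : ℝ) + 1) ^ 2) u = π ^ 2 / 6 - π * |u| / 2 + u ^ 2 / 4 := by
  rw [← (cosSeries.even _).apply_abs, ← sq_abs u]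
  have hx : |u| / (2 * π) ∈ Set.Icc (0 : ℝ) 1 :=
    ⟨by positivity, (div_le_one (by positivity)).2 hu⟩
  -- Mathlib's series starts at `n = 0`, where the term vanishes because `1 / 0 = 0`
  have H := (hasSum_nat_add_iff' 1).2 (hasSum_one_div_nat_pow_mul_cos one_ne_zero hx)
  rw [← bernoulliFun] at H
  norm_num at H
  have hf : (fun k : ℕ => 1 / ((k : ℝ) + 1) ^ 2 * cos ((k + 1) * |u|))
      = fun k : ℕ => ((k + 1 : ℝ) ^ 2)⁻¹ * cos (2 * π * (k + 1) * (|u| / (2 * π))) := by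
    funext k
    rw [one_div, show 2 * π * ((k : ℝ) + 1) * (|u| / (2 * π)) = (k + 1) * |u| by field_simp]
  refine HasSum.tsum_eq ?_
  rw [hf, show π ^ 2 / 6 - π * |u| / 2 + |u| ^ 2 / 4
      = (2 * π) ^ 2 / 2 / 2 * ((|u| / (2 * π)) ^ 2 - |u| / (2 * π) + 1 / 6) by field_simp; ring]
  exact H

lemma cosSeries_one_div_sq_mul_cos {w x : ℝ} (hw : w ∈ Set.Icc 0 π) (hx : x ∈ Set.Icc 0 π) :
    cosSeries (fun k => 1 / ((k : ℝ) + 1) ^ 2 * cos ((k + 1) * x)) w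
      = π ^ 2 / 6 - π * max w x / 2 + (w ^ 2 + x ^ 2) / 4 := by
  obtain ⟨hw0, hwπ⟩ := hw
  obtain ⟨hx0, hxπ⟩ := hx
  have hmax : |w - x| = 2 * max w x - (w + x) := by
    linarith [min_add_max w x, max_sub_min_eq_abs' w x]
  rw [cosSeries.mul_cos summable_one_div_succ_sq,
    cosSeries_one_div_sq (by rw [abs_of_nonneg (by linarith)]; linarith),
    cosSeries_one_div_sq (by rw [abs_le]; constructor <;> linarith),
    abs_of_nonneg (by linarith : 0 ≤ w + x), hmax]
  ring

-- `cosSeries (sinProdCoeff r)` is `F_m(r; ·)`, the index `k` standing for the frequency `k + 1`.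
noncomputable def sinProdCoeff {m : ℕ} (r : Fin m → ℝ) (k : ℕ) : ℝ :=
  (∏ i, sin ((k + 1) * r i)) / ((k : ℝ) + 1) ^ m

lemma summable_sinProdCoeff {m : ℕ} (hm : 2 ≤ m) (r : Fin m → ℝ) : Summable (sinProdCoeff r) := by
  refine .of_norm_bounded summable_one_div_succ_sq fun k => ?_
  rw [sinProdCoeff, norm_div, norm_prod, norm_pow,
    Real.norm_of_nonneg (by positivity : (0 : ℝ) ≤ k + 1)]
  gcongr
  · exact prod_le_one (fun _ _ => norm_nonneg _) fun i _ => abs_sin_le_one _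
  · exact le_add_of_nonneg_left k.cast_nonneg

lemma sinProdCoeff_succ {m : ℕ} (r : Fin (m + 1) → ℝ) (k : ℕ) :
    sinProdCoeff r k = sinProdCoeff (Fin.init r) k * sin ((k + 1) * r (Fin.last m)) / (k + 1) := by
  rw [sinProdCoeff, sinProdCoeff, Fin.prod_univ_castSucc, pow_succ]
  simp only [Fin.init]
  field_simp

lemma cosSeries_sinProdCoeff_succ {m : ℕ} (hm : 2 ≤ m) (r : Fin (m + 1) → ℝ) (x : ℝ) :
    cosSeries (sinProdCoeff r) x = (∫ t in x - r (Fin.last m)..x + r (Fin.last m),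
      cosSeries (sinProdCoeff (Fin.init r)) t) / 2 := by
  rw [cosSeries.integral_sub_add (summable_sinProdCoeff hm _)]
  simp only [← sinProdCoeff_succ]
  ring

lemma cosSeries_sinProdCoeff_two (r : Fin 2 → ℝ) (x : ℝ) :
    cosSeries (sinProdCoeff r) x
      = (cosSeries (fun k => 1 / ((k : ℝ) + 1) ^ 2 * cos ((k + 1) * x)) (r 0 - r 1)
        - cosSeries (fun k => 1 / ((k : ℝ) + 1) ^ 2 * cos ((k + 1) * x)) (r 0 + r 1)) / 2 := by
  rw [← cosSeries.tsum_mul_sin_mul_sin (cosSeries.summable_mul_cos summable_one_div_succ_sq x)]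
  refine tsum_congr fun k => ?_
  rw [sinProdCoeff, Fin.prod_univ_two]
  ring

lemma antitone_max_sub_max {d v : ℝ} (h : d ≤ v) : Antitone fun x : ℝ => max v x - max d x := by
  intro x y hxy
  simp only [max_def]
  split_ifs <;> linarith

lemma antitoneOn_cosSeries_sinProdCoeff_two (r : Fin 2 → ℝ) (hr : ∀ i, r i ∈ Set.Icc 0 π) :
    AntitoneOn (cosSeries (sinProdCoeff r)) (Set.Icc 0 π) := by
  obtain ⟨ha0, haπ⟩ := hr 0
  obtain ⟨hb0, hbπ⟩ := hr 1
  obtain ⟨v, hv, hdv, hsv⟩ : ∃ v ∈ Set.Icc 0 π, |r 0 - r 1| ≤ v ∧ ∀ x,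
      cosSeries (fun k => 1 / ((k : ℝ) + 1) ^ 2 * cos ((k + 1) * x)) (r 0 + r 1)
        = cosSeries (fun k => 1 / ((k : ℝ) + 1) ^ 2 * cos ((k + 1) * x)) v := by
    rcases le_total (r 0 + r 1) π with h | h
    · exact ⟨r 0 + r 1, ⟨by linarith, h⟩, by rw [abs_le]; constructor <;> linarith, fun _ => rfl⟩
    · refine ⟨2 * π - (r 0 + r 1), ⟨by linarith, by linarith⟩, ?_, fun x => ?_⟩
      · rw [abs_le]; constructor <;> linarith
      · exact ((cosSeries.even _).apply_two_pi_sub (cosSeries.periodic _) _).symm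
  have hd : |r 0 - r 1| ∈ Set.Icc 0 π := ⟨abs_nonneg _, by rw [abs_le]; constructor <;> linarith⟩
  have hF : ∀ x ∈ Set.Icc 0 π, cosSeries (sinProdCoeff r) x
      = π / 4 * (max v x - max |r 0 - r 1| x) + (|r 0 - r 1| ^ 2 - v ^ 2) / 8 := by
    intro x hx
    rw [cosSeries_sinProdCoeff_two, ← (cosSeries.even _).apply_abs (r 0 - r 1), hsv,
      cosSeries_one_div_sq_mul_cos hd hx, cosSeries_one_div_sq_mul_cos hv hx]
    ring
  intro x hx y hy hxy
  rw [hF x hx, hF y hy]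
  have := mul_le_mul_of_nonneg_left (antitone_max_sub_max hdv hxy) (by positivity : 0 ≤ π / 4)
  linarith

theorem antitoneOn_cosSeries_sinProdCoeff {m : ℕ} (hm : 2 ≤ m) (r : Fin m → ℝ)
    (hr : ∀ i, r i ∈ Set.Icc 0 π) : AntitoneOn (cosSeries (sinProdCoeff r)) (Set.Icc 0 π) := by
  induction m, hm using Nat.le_induction with
  | base => exact antitoneOn_cosSeries_sinProdCoeff_two r hr
  | succ m hm ih =>
    have hinit := ih (Fin.init r) fun i => hr _
    have hint := antitoneOn_integral_sub_add (cosSeries.continuous (summable_sinProdCoeff hm _))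
      (cosSeries.even _) (cosSeries.periodic _) hinit (hr (Fin.last m))
    intro x hx y hy hxy
    rw [cosSeries_sinProdCoeff_succ hm, cosSeries_sinProdCoeff_succ hm]
    exact div_le_div_of_nonneg_right (hint hx hy hxy) zero_le_two

theorem tsum_prod_sin_div_pow_nonneg {m : ℕ} (hm : 2 ≤ m) (r : Fin (m + 2) → ℝ)
    (hr : ∀ i, r i ∈ Set.Icc 0 π) :
    0 ≤ ∑' k : ℕ, (∏ i, sin ((k + 1) * r i)) / ((k : ℝ) + 1) ^ m := by
  set a := r (Fin.last m).castSucc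
  set b := r (Fin.last (m + 1))
  obtain ⟨ha0, haπ⟩ := hr (Fin.last m).castSucc
  obtain ⟨hb0, hbπ⟩ := hr (Fin.last (m + 1))
  have hsplit : ∀ k : ℕ, (∏ i, sin ((k + 1) * r i)) / ((k : ℝ) + 1) ^ m
      = sinProdCoeff (Fin.init (Fin.init r)) k * sin ((k + 1) * a) * sin ((k + 1) * b) := by
    intro k
    rw [Fin.prod_univ_castSucc, Fin.prod_univ_castSucc, sinProdCoeff]
    simp only [Fin.init]
    ring
  simp only [hsplit]
  rw [cosSeries.tsum_mul_sin_mul_sin (summable_sinProdCoeff hm _), sub_div, sub_nonneg]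
  gcongr
  apply le_of_abs_le_of_abs_le_two_pi_sub (cosSeries.even _) (cosSeries.periodic _)
    (antitoneOn_cosSeries_sinProdCoeff hm _ fun i => hr _) <;>
    rw [abs_le] <;> constructor <;> linarith

theorem spherical_volume_nonneg (n : ℕ) (hn : 4 ≤ n) (r : Fin n → ℝ)
    (hr : ∀ i, 0 < r i ∧ r i < π) :
    0 ≤ ∑' k : ℕ, (∏ i, Real.sin (((k : ℝ) + 1) * r i)) / ((k : ℝ) + 1) ^ (n - 2) := by
  obtain ⟨m, rfl⟩ : ∃ m, n = m + 2 := ⟨n - 2, by omega⟩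
  exact tsum_prod_sin_div_pow_nonneg (by omega) r fun i => ⟨(hr i).1.le, (hr i).2.le⟩
end

section
/- Let n ≥ 4 be an integer and let r_1, …, r_n be real numbers with 0 < r_i < π for all i. If there exists a subset I ⊆ {1,…,n} of odd cardinality with r_I > r_{Ī} + (|I| − 1)π, then Σ_{k=1}^∞ (sin(k r_1)⋯sin(k r_n))/k^{n−2} = 0. -/
/-!
Reflecting the sides indexed by `I` (`r i ↦ π - r i`) multiplies the `k`-th summand by
`(-1) ^ (k + 1)`, because `#I` is odd, and the hypothesis becomes `∑ i, s i < π` for the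
reflected lengths `s i ≥ 0`. Writing each `sin (k s_i)` through exponentials turns
`(-1) ^ k ∏ i, sin (k s_i) / k ^ m` (with `m = n - 2`) into an alternating sum over subsets
`U` of the Fourier series `∑ k, Re ((-i) ^ m e^{i k θ}) / k ^ m` at the points
`θ_U = π + ∑ s - 2 ∑_{i ∈ U} s_i`.
All these points lie in `[0, 2π]`, where that series is a Bernoulli polynomial of degree `m` in
`θ`; so the total is an `n`-fold finite difference of a polynomial of degree `m < n`, which
vanishes.
-/

open Real Finset Polynomial
open scoped Nat

theorem Polynomial.natDegree_bernoulli_le (n : ℕ) : (Polynomial.bernoulli n).natDegree ≤ n :=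
  natDegree_sum_le_of_forall_le _ _ fun _ _ => (natDegree_monomial_le _).trans (Nat.sub_le _ _)

theorem exists_natDegree_le_bernoulliFun_div_eq_eval (m : ℕ) (c : ℝ) :
    ∃ P : ℝ[X], P.natDegree ≤ m ∧ ∀ x, bernoulliFun m (x / c) = P.eval x := by
  refine ⟨((Polynomial.bernoulli m).map (algebraMap ℚ ℝ)).comp (C c⁻¹ * X), ?_,
    fun x => ?_⟩
  · calc _ ≤ m * 1 := natDegree_comp_le.trans <| Nat.mul_le_mul
          (natDegree_map_le.trans (natDegree_bernoulli_le m))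
          ((natDegree_C_mul_le _ _).trans natDegree_X_le)
      _ = m := mul_one m
  · simp [bernoulliFun, div_eq_inv_mul]

theorem Polynomial.sum_powerset_neg_one_pow_card_mul_eval_add_sum_eq_zero {R ι : Type*}
    [CommRing R] [DecidableEq ι] (S : Finset ι) {Q : R[X]} (hQ : Q.degree < #S) (a : R)
    (d : ι → R) : ∑ T ∈ S.powerset, (-1) ^ #T * Q.eval (a + ∑ i ∈ T, d i) = 0 := by
  induction S using Finset.induction_on generalizing Q with
  | empty =>
    rw [card_empty, Nat.cast_zero, Nat.WithBot.lt_zero_iff, degree_eq_bot] at hQ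
    simp [hQ]
  | @insert i S hi ih =>
    have hstep : ∀ T ∈ S.powerset, (-1) ^ #T * Q.eval (a + ∑ j ∈ T, d j) +
        (-1) ^ #(insert i T) * Q.eval (a + ∑ j ∈ insert i T, d j) =
        (-1) ^ #T * (Q - taylor (d i) Q).eval (a + ∑ j ∈ T, d j) := by
      intro T hT
      have hiT : i ∉ T := fun h => hi (mem_powerset.mp hT h)
      rw [card_insert_of_notMem hiT, sum_insert hiT, eval_sub, taylor_eval, pow_succ]
      ring_nf
    rw [sum_powerset_insert hi, ← sum_add_distrib, sum_congr rfl hstep]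
    refine ih ?_
    by_cases hQ0 : Q = 0
    · simp [hQ0]
    rw [card_insert_of_notMem hi] at hQ
    exact (degree_sub_lt_left (degree_taylor Q (d i)).symm hQ0
      (leadingCoeff_taylor (d i) Q).symm).trans_le (Order.le_of_lt_succ hQ)

theorem pi_add_sum_add_sum_neg_two_mul_mem_Icc {ι : Type*} [Fintype ι] {s : ι → ℝ}
    (hs : ∀ i, 0 ≤ s i) (hsum : ∑ i, s i ≤ π) (U : Finset ι) :
    π + ∑ i, s i + ∑ i ∈ U, -2 * s i ∈ Set.Icc 0 (2 * π) := by
  have hU : ∑ i ∈ U, s i ≤ ∑ i, s i :=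
    sum_le_sum_of_subset_of_nonneg (subset_univ U) fun i _ _ => hs i
  have hU0 : 0 ≤ ∑ i ∈ U, s i := sum_nonneg fun i _ => hs i
  rw [← mul_sum]
  constructor <;> linarith

section

open Complex (I)

theorem hasSum_re_neg_I_pow_mul_exp_div_pow {m : ℕ} (hm : 2 ≤ m) {θ : ℝ}
    (hθ : θ ∈ Set.Icc 0 (2 * π)) :
    HasSum (fun k : ℕ => ((-I) ^ m * Complex.exp (k * θ * I)).re / k ^ m)
      (-(2 * π) ^ m / (2 * m !) * bernoulliFun m (θ / (2 * π))) := by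
  have hx : θ / (2 * π) ∈ Set.Icc (0 : ℝ) 1 :=
    ⟨div_nonneg hθ.1 (by positivity), div_le_one_of_le₀ hθ.2 (by positivity)⟩
  have h := (hasSum_one_div_nat_pow_mul_fourier hm hx).mul_left ((-I) ^ m / 2)
  rw [← Complex.hasSum_ofReal]
  have hf : (fun k : ℕ => ((((-I) ^ m * Complex.exp (k * θ * I)).re / k ^ m : ℝ) : ℂ)) =
      fun k : ℕ => (-I) ^ m / 2 * (1 / (k : ℂ) ^ m *
        (fourier k (↑(θ / (2 * π)) : UnitAddCircle) +
          (-1) ^ m * fourier (-k : ℤ) (↑(θ / (2 * π)) : UnitAddCircle))) := by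
    ext k
    rw [fourier_coe_apply, fourier_coe_apply, Complex.ofReal_div, Complex.re_eq_add_conj]
    simp only [map_mul, map_pow, map_neg, Complex.conj_I, ← Complex.exp_conj,
      Complex.conj_ofReal, map_natCast]
    push_cast
    field_simp
    rw [show I ^ m = (-I) ^ m * (-1) ^ m by rw [← mul_pow, neg_mul_neg, mul_one]]
    ring
  have hv : ((-(2 * π) ^ m / (2 * m !) * bernoulliFun m (θ / (2 * π)) : ℝ) : ℂ) =
      (-I) ^ m / 2 * (-(2 * π * I) ^ m / m ! * bernoulliFun m (θ / (2 * π))) := by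
    push_cast
    rw [mul_pow, mul_pow, ← mul_pow]
    field_simp
    rw [mul_assoc _ ((-I) ^ m), ← mul_pow, neg_mul, Complex.I_mul_I, neg_neg, one_pow, mul_one]
  rwa [hf, hv]

theorem Complex.two_mul_I_mul_sin (z : ℂ) : 2 * I * sin z = exp (z * I) - exp (-z * I) := by
  rw [Complex.sin]
  linear_combination (exp (-z * I) - exp (z * I)) * I_sq

theorem Complex.two_mul_I_pow_card_mul_prod_sin {ι : Type*} [Fintype ι] [DecidableEq ι]
    (x : ι → ℂ) : (2 * I) ^ Fintype.card ι * ∏ i, sin (x i) =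
      ∑ U : Finset ι, (-1) ^ #U * exp ((∑ i, x i - 2 * ∑ i ∈ U, x i) * I) := by
  rw [← card_univ, ← prod_const, ← prod_mul_distrib]
  simp_rw [two_mul_I_mul_sin]
  rw [prod_sub, powerset_univ]
  refine sum_congr rfl fun U _ => ?_
  rw [mul_assoc, ← exp_sum, ← exp_sum, ← exp_add, sum_sdiff_eq_sub (subset_univ U)]
  congr 2
  simp only [← sum_mul, neg_mul, sum_neg_distrib]
  ring

theorem sum_neg_one_pow_card_mul_re_neg_I_pow_mul_exp {ι : Type*} [Fintype ι] [DecidableEq ι]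
    (s : ι → ℝ) {m j : ℕ} (hj : Fintype.card ι = m + 2 * j) (k : ℕ) :
    ∑ U : Finset ι, (-1) ^ #U * ((-I) ^ m *
        Complex.exp (k * ((π + ∑ i, s i + ∑ i ∈ U, -2 * s i : ℝ) : ℂ) * I)).re =
      2 ^ Fintype.card ι * (-1) ^ j * ((-1) ^ k * ∏ i, Real.sin (k * s i)) := by
  have hexp : ∀ U : Finset ι,
      Complex.exp (k * ((π + ∑ i, s i + ∑ i ∈ U, -2 * s i : ℝ) : ℂ) * I) =
      (-1) ^ k * Complex.exp ((∑ i, k * (s i : ℂ) - 2 * ∑ i ∈ U, k * (s i : ℂ)) * I) := by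
    intro U
    rw [← Complex.exp_pi_mul_I, ← Complex.exp_nat_mul, ← Complex.exp_add]
    congr 1
    push_cast
    simp only [← mul_sum]
    ring
  have hpow : (-I) ^ m * (2 * I) ^ Fintype.card ι = 2 ^ Fintype.card ι * (-1) ^ j := by
    have hI : (-I) ^ m * I ^ m = 1 := by
      rw [← mul_pow, neg_mul, Complex.I_mul_I, neg_neg, one_pow]
    rw [mul_pow, hj, pow_add I, pow_mul I, Complex.I_sq]
    linear_combination (2 ^ (m + 2 * j) * (-1) ^ j) * hI
  have hsum := Complex.two_mul_I_pow_card_mul_prod_sin fun i => (k * s i : ℂ)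
  have hcomplex : ∑ U : Finset ι, (((-1) ^ #U : ℝ) : ℂ) *
      ((-I) ^ m * Complex.exp (k * ((π + ∑ i, s i + ∑ i ∈ U, -2 * s i : ℝ) : ℂ) * I)) =
      ((2 ^ Fintype.card ι * (-1) ^ j * ((-1) ^ k * ∏ i, Real.sin (k * s i)) : ℝ) : ℂ) := by
    simp only [hexp]
    push_cast
    rw [← hpow, mul_assoc, mul_left_comm _ ((-1) ^ k), hsum, mul_sum, mul_sum]
    exact sum_congr rfl fun U _ => by ring
  simpa only [Complex.re_sum, Complex.re_ofReal_mul, Complex.ofReal_re] using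
    congrArg Complex.re hcomplex

theorem hasSum_neg_one_pow_mul_prod_sin_div_pow_eq_zero {ι : Type*} [Fintype ι] {s : ι → ℝ}
    (hs : ∀ i, 0 ≤ s i) (hsum : ∑ i, s i ≤ π) {m : ℕ} (hm : 2 ≤ m)
    (hmι : m < Fintype.card ι) (hpar : Even (Fintype.card ι - m)) :
    HasSum (fun k : ℕ => (-1) ^ k * (∏ i, Real.sin (k * s i)) / k ^ m) 0 := by
  classical
  obtain ⟨j, hj⟩ : ∃ j, Fintype.card ι = m + 2 * j := by
    obtain ⟨j, hj⟩ := hpar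
    exact ⟨j, by omega⟩
  set θ : Finset ι → ℝ := fun U => π + ∑ i, s i + ∑ i ∈ U, -2 * s i
  obtain ⟨P, hPdeg, hP⟩ := exists_natDegree_le_bernoulliFun_div_eq_eval m (2 * π)
  set c : ℝ := -(2 * π) ^ m / (2 * m !)
  have hterm : ∀ U ∈ (univ : Finset (Finset ι)), HasSum
      (fun k : ℕ => (-1) ^ #U * (((-I) ^ m * Complex.exp (k * θ U * I)).re / k ^ m))
      ((-1) ^ #U * (c * P.eval (θ U))) := fun U _ => by
    rw [← hP]
    exact (hasSum_re_neg_I_pow_mul_exp_div_pow hm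
      (pi_add_sum_add_sum_neg_two_mul_mem_Icc hs hsum U)).mul_left _
  have hvanish : ∑ U : Finset ι, (-1) ^ #U * (c * P.eval (θ U)) = 0 := by
    simp only [mul_left_comm _ c, ← mul_sum, ← powerset_univ]
    rw [Polynomial.sum_powerset_neg_one_pow_card_mul_eval_add_sum_eq_zero, mul_zero]
    calc P.degree ≤ P.natDegree := degree_le_natDegree
      _ < #(univ : Finset ι) := by rw [card_univ]; exact_mod_cast hPdeg.trans_lt hmι
  have htotal := hasSum_sum hterm
  rw [hvanish] at htotal
  have hfun : (fun k : ℕ => ∑ U : Finset ι,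
      (-1) ^ #U * (((-I) ^ m * Complex.exp (k * θ U * I)).re / k ^ m)) =
      fun k : ℕ =>
        2 ^ Fintype.card ι * (-1) ^ j * ((-1) ^ k * (∏ i, Real.sin (k * s i)) / k ^ m) := by
    ext k
    simp only [mul_div_assoc', ← sum_div]
    exact congrArg (· / _) (sum_neg_one_pow_card_mul_re_neg_I_pow_mul_exp s hj k)
  rw [hfun] at htotal
  have hne : (2 : ℝ) ^ Fintype.card ι * (-1) ^ j ≠ 0 := by simp
  exact (hasSum_mul_left_iff hne).mp (by rwa [mul_zero])

end

theorem neg_one_pow_mul_prod_sin_nat_mul_reflect {ι : Type*} [Fintype ι] [DecidableEq ι]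
    (r : ι → ℝ) {J : Finset ι} (hJ : Odd #J) (k : ℕ) :
    (-1) ^ k * ∏ i, Real.sin (k * if i ∈ J then π - r i else r i) =
      -∏ i, Real.sin (k * r i) := by
  have hfactor : ∀ i, Real.sin (k * if i ∈ J then π - r i else r i) =
      (if i ∈ J then -(-1) ^ k else 1) * Real.sin (k * r i) := by
    intro i
    split_ifs
    · rw [mul_sub, sin_nat_mul_pi_sub, neg_mul]
    · rw [one_mul]
  rw [prod_congr rfl fun i _ => hfactor i, prod_mul_distrib, prod_ite_mem, univ_inter,
    prod_const, hJ.neg_pow, ← pow_mul, mul_comm k #J, pow_mul, hJ.neg_one_pow, neg_mul,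
    mul_neg, ← mul_assoc, ← mul_pow]
  simp

theorem spherical_volume_zero (n : ℕ) (hn : 4 ≤ n) (r : Fin n → ℝ)
    (hr : ∀ i, 0 < r i ∧ r i < π)
    (hI : ∃ I : Finset (Fin n), Odd I.card ∧
      ∑ i ∈ I, r i > ∑ i ∈ Iᶜ, r i + ((I.card : ℝ) - 1) * π) :
    ∑' k : ℕ, (∏ i, Real.sin (((k : ℝ) + 1) * r i)) / ((k : ℝ) + 1) ^ (n - 2) = 0 := by
  obtain ⟨I, hIodd, hIgt⟩ := hI
  set s : Fin n → ℝ := fun i => if i ∈ I then π - r i else r i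
  have hs : ∀ i, 0 ≤ s i := fun i => by
    simp only [s]; split_ifs <;> linarith [hr i]
  have hsum : ∑ i, s i ≤ π := by
    rw [← sum_add_sum_compl I s, sum_congr rfl fun i hi => if_pos hi,
      sum_congr rfl fun i hi => if_neg (mem_compl.mp hi), sum_sub_distrib, sum_const,
      nsmul_eq_mul]
    linarith
  have hvanish := hasSum_neg_one_pow_mul_prod_sin_div_pow_eq_zero hs hsum (m := n - 2)
    (by omega) (by rw [Fintype.card_fin]; omega)
    (by rw [Fintype.card_fin, show n - (n - 2) = 2 by omega]; exact even_two)
  simp only [s, neg_one_pow_mul_prod_sin_nat_mul_reflect r hIodd, neg_div] at hvanish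
  -- the `k = 0` term is `0 / 0 = 0`, so dropping it changes nothing
  have hshift := (hasSum_nat_add_iff' 1).mpr (neg_zero (G := ℝ) ▸ hvanish.neg)
  simp only [neg_neg] at hshift
  push_cast at hshift
  simpa [show n ≠ 0 by omega] using hshift.tsum_eq
end

section
/- Let n ≥ 2 be an integer and let r_1, …, r_{2n} be real numbers with 0 < r_i < π for all i. Then (2^{2n−1}/π)·Σ_{k=1}^∞ (sin(k r_1)⋯sin(k r_{2n}))/k^{2n−2} = ((2π)^{2n−3}/(2·(2n−2)!))·Σ_{I ⊆ {1,…,2n}} (−1)^{|I|} B_{2n−2}({(r_I − r_{Ī})/(2π)}). -/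
/-!
Writing `2i sin x = e^{ix} - e^{-ix}` and expanding the product, an even product of sines is a
signed sum of cosines of the phases `r_I - r_Ī`. Summed against `k^{-(2n-2)}`, each cosine becomes
the Fourier series of the periodic Bernoulli function `B_{2n-2}({θ/2π})`.
-/

open Real Finset

section ProdSin

variable {ι : Type*} [Fintype ι] [DecidableEq ι]

lemma prod_two_I_mul_sin_eq_sum_exp (a : ι → ℝ) :
    ∏ i, (2 * Complex.I * Complex.sin (a i)) =
      ∑ I : Finset ι, (-1) ^ #Iᶜ *
        Complex.exp (((∑ i ∈ I, a i - ∑ i ∈ Iᶜ, a i : ℝ) : ℂ) * Complex.I) := by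
  have h (x : ℂ) : 2 * Complex.I * Complex.sin x =
      Complex.exp (x * Complex.I) + -Complex.exp (-x * Complex.I) := by
    linear_combination Complex.I * Complex.two_sin x +
      (Complex.exp (-x * Complex.I) - Complex.exp (x * Complex.I)) * Complex.I_sq
  simp_rw [h, prod_add, powerset_univ, ← compl_eq_univ_sdiff]
  refine sum_congr rfl fun I _ => ?_
  rw [prod_neg, ← Complex.exp_sum, ← Complex.exp_sum, mul_left_comm, ← Complex.exp_add]
  push_cast
  simp only [neg_mul, sum_neg_distrib, ← sum_mul]
  ring_nf

lemma neg_four_pow_mul_prod_sin {n : ℕ} (hι : Fintype.card ι = 2 * n) (a : ι → ℝ) :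
    (-4) ^ n * ∏ i, sin (a i) =
      ∑ I : Finset ι, (-1) ^ #I * cos (∑ i ∈ I, a i - ∑ i ∈ Iᶜ, a i) := by
  have hsign (I : Finset ι) : ((-1) ^ #Iᶜ : ℂ) = ((-1) ^ #I : ℝ) := by
    have := card_add_card_compl I
    push_cast
    exact neg_one_pow_congr (by rw [hι] at this; grind)
  have := congrArg Complex.re (prod_two_I_mul_sin_eq_sum_exp a)
  rw [prod_mul_distrib, prod_const, card_univ, hι, pow_mul, mul_pow, Complex.I_sq] at this
  simp_rw [hsign, Complex.re_sum, Complex.re_ofReal_mul, Complex.exp_ofReal_mul_I_re] at this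
  rw [← this, show (2 ^ 2 * -1 : ℂ) = ((-4 : ℝ) : ℂ) by norm_num]
  simp only [← Complex.ofReal_sin, ← Complex.ofReal_prod, ← Complex.ofReal_pow,
    ← Complex.ofReal_mul, Complex.ofReal_re]

end ProdSin

lemma cos_two_pi_mul_nat_mul_fract (j : ℕ) (θ : ℝ) :
    cos (2 * π * j * Int.fract (θ / (2 * π))) = cos (j * θ) := by
  rw [← cos_add_int_mul_two_pi _ (j * ⌊θ / (2 * π)⌋), Int.fract]
  congr 1
  push_cast
  rw [mul_sub, show 2 * π * j * (θ / (2 * π)) = j * θ by field_simp]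
  ring

lemma hasSum_cos_succ_mul_div_pow {k : ℕ} (hk : k ≠ 0) (θ : ℝ) :
    HasSum (fun j : ℕ => cos ((j + 1) * θ) / (j + 1) ^ (2 * k))
      ((-1) ^ (k + 1) * (2 * π) ^ (2 * k) / 2 / (2 * k).factorial *
        Polynomial.aeval (Int.fract (θ / (2 * π))) (Polynomial.bernoulli (2 * k))) := by
  have h := hasSum_one_div_nat_pow_mul_cos hk
    ⟨Int.fract_nonneg (θ / (2 * π)), (Int.fract_lt_one _).le⟩
  rw [← hasSum_nat_add_iff' 1] at h
  simp only [range_one, sum_singleton, Nat.cast_zero, zero_pow (by omega : 2 * k ≠ 0), div_zero,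
    zero_mul, sub_zero, cos_two_pi_mul_nat_mul_fract] at h
  rw [Polynomial.aeval_def, ← Polynomial.eval_map]
  refine h.congr_fun fun j => ?_
  push_cast
  ring

theorem volume_even_bernoulli_general (n : ℕ) (hn : 2 ≤ n) (r : Fin (2 * n) → ℝ) :
    (2 ^ (2 * n - 1) / π) *
      ∑' k : ℕ, (∏ i, Real.sin (((k : ℝ) + 1) * r i)) / ((k : ℝ) + 1) ^ (2 * n - 2) =
    ((2 * π) ^ (2 * n - 3) / (2 * (Nat.factorial (2 * n - 2) : ℝ))) *
      ∑ I : Finset (Fin (2 * n)), (-1 : ℝ) ^ I.card *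
        Polynomial.aeval (Int.fract ((∑ i ∈ I, r i - ∑ i ∈ Iᶜ, r i) / (2 * π)))
          (Polynomial.bernoulli (2 * n - 2)) := by
  obtain ⟨m, rfl⟩ : ∃ m, n = m + 2 := ⟨n - 2, by omega⟩
  rw [show 2 * (m + 2) - 1 = 2 * m + 3 by omega, show 2 * (m + 2) - 2 = 2 * (m + 1) by omega,
    show 2 * (m + 2) - 3 = 2 * m + 1 by omega]
  have hsum : HasSum (fun j : ℕ => (∏ i, sin ((j + 1) * r i)) / (j + 1) ^ (2 * (m + 1)))
      (((-4) ^ (m + 2))⁻¹ * ∑ I : Finset (Fin (2 * (m + 2))), (-1) ^ #I *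
        ((-1) ^ (m + 2) * (2 * π) ^ (2 * (m + 1)) / 2 / (2 * (m + 1)).factorial *
          Polynomial.aeval (Int.fract ((∑ i ∈ I, r i - ∑ i ∈ Iᶜ, r i) / (2 * π)))
            (Polynomial.bernoulli (2 * (m + 1))))) := by
    refine ((hasSum_sum fun I _ => (hasSum_cos_succ_mul_div_pow m.succ_ne_zero _).mul_left
      ((-1) ^ #I)).mul_left _).congr_fun fun j => ?_
    rw [eq_inv_mul_iff_mul_eq₀ (by norm_num), ← mul_div_assoc,
      neg_four_pow_mul_prod_sin (by simp), sum_div]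
    simp only [← mul_sum, ← mul_sub, mul_div_assoc]
  rw [hsum.tsum_eq, mul_sum, mul_sum, mul_sum]
  refine sum_congr rfl fun I _ => ?_
  generalize (Polynomial.aeval _ (Polynomial.bernoulli _) : ℝ) = b
  rw [neg_pow, show (4 : ℝ) = 2 ^ 2 by norm_num, ← pow_mul]
  field_simp
  ring

theorem volume_even_bernoulli (n : ℕ) (hn : 2 ≤ n) (r : Fin (2 * n) → ℝ)
    (hr : ∀ i, 0 < r i ∧ r i < π) :
    (2 ^ (2 * n - 1) / π) *
      ∑' k : ℕ, (∏ i, Real.sin (((k : ℝ) + 1) * r i)) / ((k : ℝ) + 1) ^ (2 * n - 2) =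
    ((2 * π) ^ (2 * n - 3) / (2 * (Nat.factorial (2 * n - 2) : ℝ))) *
      ∑ I : Finset (Fin (2 * n)), (-1 : ℝ) ^ I.card *
        Polynomial.aeval (Int.fract ((∑ i ∈ I, r i - ∑ i ∈ Iᶜ, r i) / (2 * π)))
          (Polynomial.bernoulli (2 * n - 2)) :=
  volume_even_bernoulli_general n hn r
end

section
/- Let n ≥ 0 be an integer and let x_1, …, x_{2n+1} be real numbers. Then sin(x_1)⋯sin(x_{2n+1}) = ((−1)^n/2^{2n})·Σ_{I ⊆ {1,…,2n+1}, |I| odd} sin(Σ_{i∈I} x_i − Σ_{i∉I} x_i). -/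
open Real Finset

/-!
Writing `2i sin x = e^{ix} - e^{-ix}` and expanding the product, `(2i)^N ∏ sin xᵢ` becomes a sum
over all subsets `J` of `(-1)^{|Jᶜ|} e^{i(x_J - x_{Jᶜ})}`. For `N` odd, complementation swaps
subsets of odd and even size and negates the phase, so the terms for `J` and `Jᶜ` (with `|J|` odd)
combine to `2i sin(x_J - x_{Jᶜ})`; dividing by `(2i)^N = 2i (-4)^n` gives the expansion.
-/

namespace Finset

variable {ι : Type*} [Fintype ι] [DecidableEq ι]

lemma even_card_compl_iff (hι : Odd (Fintype.card ι)) (J : Finset ι) :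
    Even Jᶜ.card ↔ Odd J.card := by
  rw [card_compl, Nat.even_sub (card_le_univ J), ← Nat.not_odd_iff_even, ← Nat.not_odd_iff_even]
  tauto

lemma sum_eq_sum_filter_odd_card_add_compl {M : Type*} [AddCommMonoid M]
    (hι : Odd (Fintype.card ι)) (f : Finset ι → M) :
    ∑ J, f J = ∑ J ∈ univ.filter (fun J : Finset ι => Odd J.card), (f J + f Jᶜ) := by
  rw [sum_add_distrib, ← sum_filter_add_sum_filter_not univ (fun J : Finset ι => Odd J.card)]
  congr 1
  refine sum_nbij' compl compl ?_ ?_ ?_ ?_ ?_ <;> simp [← even_card_compl_iff hι]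

end Finset

namespace Complex

variable {ι : Type*} [Fintype ι] [DecidableEq ι]

lemma two_I_mul_sin (z : ℂ) : 2 * I * sin z = exp (z * I) - exp (-z * I) := by
  rw [exp_mul_I, exp_mul_I, sin_neg, cos_neg]
  ring_nf

lemma prod_two_I_mul_sin (y : ι → ℂ) :
    ∏ i, (2 * I * sin (y i)) =
      ∑ J : Finset ι, (-1) ^ Jᶜ.card * exp ((∑ i ∈ J, y i - ∑ i ∈ Jᶜ, y i) * I) := by
  simp_rw [two_I_mul_sin, sub_eq_add_neg, prod_add, powerset_univ, ← compl_eq_univ_sdiff,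
    prod_neg, ← exp_sum]
  refine sum_congr rfl fun J _ => ?_
  rw [mul_left_comm, ← exp_add, add_mul, neg_mul, sum_mul, sum_mul, ← sum_neg_distrib]
  simp only [neg_mul]

lemma two_I_pow_card_mul_prod_sin (hι : Odd (Fintype.card ι)) (y : ι → ℂ) :
    (2 * I) ^ Fintype.card ι * ∏ i, sin (y i) =
      2 * I * ∑ J ∈ univ.filter (fun J : Finset ι => Odd J.card),
        sin (∑ i ∈ J, y i - ∑ i ∈ Jᶜ, y i) := by
  rw [← card_univ, ← prod_const, ← prod_mul_distrib, prod_two_I_mul_sin,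
    sum_eq_sum_filter_odd_card_add_compl hι, mul_sum]
  refine sum_congr rfl fun J hJ => ?_
  replace hJ : Odd J.card := (mem_filter.1 hJ).2
  rw [compl_compl, (even_card_compl_iff hι J |>.2 hJ).neg_one_pow, hJ.neg_one_pow, two_I_mul_sin]
  ring_nf

lemma prod_sin_of_card_eq_two_mul_add_one {n : ℕ} (hι : Fintype.card ι = 2 * n + 1)
    (y : ι → ℂ) :
    ∏ i, sin (y i) = ((-1) ^ n / 2 ^ (2 * n)) *
      ∑ J ∈ univ.filter (fun J : Finset ι => Odd J.card), sin (∑ i ∈ J, y i - ∑ i ∈ Jᶜ, y i) := by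
  have hpow : (2 * I) ^ (2 * n + 1) = 2 * I * (-4) ^ n := by
    rw [pow_succ', pow_mul, mul_pow, I_sq]
    norm_num
  have key := two_I_pow_card_mul_prod_sin (hι ▸ odd_two_mul_add_one n) y
  rw [hι, hpow, mul_assoc, mul_right_inj' (by simp [I_ne_zero])] at key
  rw [← key, ← mul_assoc, div_mul_eq_mul_div, ← mul_pow, pow_mul]
  norm_num

end Complex

theorem prod_sin_odd_expansion (n : ℕ) (x : Fin (2 * n + 1) → ℝ) :
    ∏ i, Real.sin (x i) =
      ((-1 : ℝ) ^ n / 2 ^ (2 * n)) *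
        ∑ I ∈ Finset.univ.filter (fun I : Finset (Fin (2 * n + 1)) => Odd I.card),
          Real.sin (∑ i ∈ I, x i - ∑ i ∈ Iᶜ, x i) := by
  apply Complex.ofReal_injective
  push_cast
  exact Complex.prod_sin_of_card_eq_two_mul_add_one (Fintype.card_fin _) _
end

section
/- Let n ≥ 4 be an integer and let P be a real number with 0 < P < nπ. For all real numbers x_1, …, x_n with 0 < x_i < π for all i and x_1 + ⋯ + x_n = P, one has Σ_{k=1}^∞ (sin(k x_1)⋯sin(k x_n))/k^{n−2} ≤ Σ_{k=1}^∞ (sin(kP/n))^n/k^{n−2}. That is, among all spherical n-gons with fixed perimeter P, the regular n-gon (all side-lengths equal to P/n) maximizes the symplectic volume of the moduli space of polygons with those side-lengths. -/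
open Real Finset

/-!
Write `W(x) = ∑ₖ ∏ᵢ sin (k xᵢ) / k ^ (n - 2)`. Two facts drive the proof.

First, `W ≥ 0` on `[0, π]ⁿ` for `n ≥ 4`. For `n = 4` the series is computed in closed form from
`∑ₖ cos (k θ) / k² = π²/6 - π θ/2 + θ²/4` on `[0, 2π]`: the quadratic parts cancel and what is
left is `π/8` times the supermodularity defect of `min` at the points `min t (2π - t)`. For the
induction step, `sin (k a) sin (k b) / k = ½ ∫_{|a-b|}^{a+b} sin (k θ) dθ`, so `W` of `n + 1`
sides is half the integral of `W(θ, x₃, …)` over `[|a - b|, a + b]`; that integrand is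
nonnegative on `[0, π]` and odd about `π`, which makes the integral nonnegative.

Second, `sin² (k (a + b)/2) = sin (k a) sin (k b) + sin² (k (a - b)/2)`, so replacing two sides by
their mean adds to `W` the value of `W` at another point of `[0, π]ⁿ`, and never decreases it.
Among the maximizers of `W` on the compact set of side-lengths with perimeter `P`, one with least
`∑ xᵢ²` cannot have two different sides, hence is the regular polygon.
-/

lemma summable_one_div_succ_pow {p : ℕ} (hp : 2 ≤ p) :
    Summable fun k : ℕ => 1 / ((k : ℝ) + 1) ^ p := by
  simpa using (summable_nat_add_iff 1).2 (summable_one_div_nat_pow.2 hp)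

lemma norm_div_succ_pow_le {c : ℝ} (hc : |c| ≤ 1) (k p : ℕ) :
    ‖c / ((k : ℝ) + 1) ^ p‖ ≤ 1 / ((k : ℝ) + 1) ^ p := by
  have hk : 0 < ((k : ℝ) + 1) ^ p := by positivity
  rw [norm_div, Real.norm_eq_abs, Real.norm_eq_abs, abs_of_pos hk]
  exact div_le_div_of_nonneg_right hc hk.le

lemma abs_prod_sin_le_one {ι : Type*} (s : Finset ι) (f : ι → ℝ) :
    |∏ i ∈ s, sin (f i)| ≤ 1 := by
  rw [abs_prod]
  exact prod_le_one (fun _ _ => abs_nonneg _) fun _ _ => abs_sin_le_one _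

lemma sin_mul_sin_eq_cos_abs_sub_cos {K : ℝ} (hK : 0 ≤ K) (s t : ℝ) :
    sin (K * s) * sin (K * t) = (cos (K * |s - t|) - cos (K * (s + t))) / 2 := by
  rw [show K * |s - t| = |K * (s - t)| by rw [abs_mul, abs_of_nonneg hK], cos_abs, mul_sub,
    mul_add, cos_sub, cos_add]
  ring

lemma add_mem_Icc_abs_sub {a b : ℝ} (ha : a ∈ Set.Icc 0 π) (hb : b ∈ Set.Icc 0 π) :
    a + b ∈ Set.Icc |a - b| (2 * π - |a - b|) := by
  obtain ⟨ha0, ha1⟩ := ha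
  obtain ⟨hb0, hb1⟩ := hb
  rcases abs_cases (a - b) with ⟨h, -⟩ | ⟨h, -⟩ <;> rw [h] <;> constructor <;> linarith

lemma min_add_min_le_min_add_min {p P q Q : ℝ} (hp : p ≤ P) (hq : q ≤ Q) :
    min p Q + min P q ≤ min p q + min P Q := by
  simp only [min_def]
  split_ifs <;> linarith

lemma integral_sin_mul {K : ℝ} (hK : K ≠ 0) (a b : ℝ) :
    ∫ θ in a..b, sin (K * θ) = (cos (K * a) - cos (K * b)) / K := by
  rw [intervalIntegral.integral_comp_mul_left (fun θ => sin θ) hK, integral_sin, smul_eq_mul,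
    inv_mul_eq_div]

lemma integral_nonneg_of_odd_about {g : ℝ → ℝ} {p c d : ℝ} (hg : Continuous g)
    (hodd : ∀ θ, g (2 * p - θ) = -g θ) (hpos : ∀ θ ∈ Set.Icc c p, 0 ≤ g θ) (hcd : c ≤ d)
    (hcdp : c + d ≤ 2 * p) : 0 ≤ ∫ θ in c..d, g θ := by
  rcases le_total d p with hdp | hpd
  · exact intervalIntegral.integral_nonneg hcd fun θ hθ => hpos θ ⟨hθ.1, hθ.2.trans hdp⟩
  have hzero : ∫ θ in 2 * p - d..d, g θ = 0 := by
    have := intervalIntegral.integral_comp_sub_left g (2 * p) (a := 2 * p - d) (b := d)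
    simp only [hodd, intervalIntegral.integral_neg, sub_sub_cancel] at this
    linarith
  rw [← intervalIntegral.integral_add_adjacent_intervals (b := 2 * p - d)
    (hg.intervalIntegrable _ _) (hg.intervalIntegrable _ _), hzero, add_zero]
  exact intervalIntegral.integral_nonneg (by linarith) fun θ hθ => hpos θ ⟨hθ.1, by linarith [hθ.2]⟩

lemma hasSum_cos_div_sq {θ : ℝ} (hθ : θ ∈ Set.Icc 0 (2 * π)) :
    HasSum (fun k : ℕ => cos (((k : ℝ) + 1) * θ) / ((k : ℝ) + 1) ^ 2)
      (π ^ 2 / 6 - π * θ / 2 + θ ^ 2 / 4) := by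
  have hx : θ / (2 * π) ∈ Set.Icc (0 : ℝ) 1 :=
    ⟨div_nonneg hθ.1 (by positivity), (div_le_one (by positivity)).2 hθ.2⟩
  have hB : Polynomial.bernoulli 2 = .monomial 2 1 - .monomial 1 1 + .C 6⁻¹ := by
    norm_num [Polynomial.bernoulli, sum_range_succ, bernoulli_two]
    ring
  have H := (hasSum_nat_add_iff' 1).2 (hasSum_one_div_nat_pow_mul_cos one_ne_zero hx)
  rw [show 2 * 1 = 2 from rfl, hB] at H
  norm_num [Polynomial.eval_monomial] at H
  convert! H using 1
  · ext k
    rw [show 2 * π * ((k : ℝ) + 1) * (θ / (2 * π)) = ((k : ℝ) + 1) * θ by field_simp,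
      div_eq_inv_mul]
  · field_simp
    ring

lemma cos_natCast_succ_mul_sub_two_pi (k : ℕ) (θ : ℝ) :
    cos (((k : ℝ) + 1) * (θ - 2 * π)) = cos (((k : ℝ) + 1) * θ) := by
  rw [show ((k : ℝ) + 1) * (θ - 2 * π) = ((k : ℝ) + 1) * θ - (k + 1 : ℕ) * (2 * π) by
    push_cast; ring]
  exact cos_sub_nat_mul_two_pi _ _

lemma hasSum_cos_mul_cos_div_sq {α β : ℝ} (hα : α ∈ Set.Icc 0 (2 * π))
    (hβ : β ∈ Set.Icc 0 (2 * π)) :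
    HasSum (fun k : ℕ => cos (((k : ℝ) + 1) * α) * cos (((k : ℝ) + 1) * β) / ((k : ℝ) + 1) ^ 2)
      (π ^ 2 / 6 + (α ^ 2 + β ^ 2) / 4 - π * (α + β) / 2 +
        π / 2 * min (min α (2 * π - α)) (min β (2 * π - β))) := by
  wlog hβα : β ≤ α generalizing α β
  · have h := this hβ hα (le_of_not_ge hβα)
    rw [min_comm (min β _)] at h
    convert! h using 1
    · ext k; ring
    · ring
  obtain ⟨hα0, hα1⟩ := hα
  obtain ⟨hβ0, hβ1⟩ := hβ
  have hsub := hasSum_cos_div_sq (θ := α - β) ⟨by linarith, by linarith⟩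
  have hprod (k : ℕ) : cos (((k : ℝ) + 1) * α) * cos (((k : ℝ) + 1) * β) / ((k : ℝ) + 1) ^ 2 =
      (cos (((k : ℝ) + 1) * (α - β)) / ((k : ℝ) + 1) ^ 2 +
        cos (((k : ℝ) + 1) * (α + β)) / ((k : ℝ) + 1) ^ 2) / 2 := by
    rw [mul_sub, mul_add, cos_sub, cos_add]
    ring
  simp only [hprod]
  rcases le_total (α + β) (2 * π) with hsum | hsum
  · have hmin : min (min α (2 * π - α)) (min β (2 * π - β)) = β := by
      simp only [min_def]; split_ifs <;> linarith
    convert! (hsub.add (hasSum_cos_div_sq ⟨by linarith, hsum⟩)).div_const 2 using 1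
    rw [hmin]; ring
  · have hmin : min (min α (2 * π - α)) (min β (2 * π - β)) = 2 * π - α := by
      simp only [min_def]; split_ifs <;> linarith
    have hadd := hasSum_cos_div_sq (θ := α + β - 2 * π) ⟨by linarith, by linarith⟩
    simp only [cos_natCast_succ_mul_sub_two_pi] at hadd
    convert! (hsub.add hadd).div_const 2 using 1
    rw [hmin]; ring

section Averaging

open Function

variable {ι : Type*} [DecidableEq ι]

@[to_additive]
lemma prod_comp_update_update [Fintype ι] {α M : Type*} [CommMonoid M] {i j : ι} (hij : i ≠ j)
    (F : α → M) (z : ι → α) (a b : α) :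
    ∏ l, F (update (update z i a) j b l) = F a * F b * ∏ l ∈ {i, j}ᶜ, F (z l) := by
  rw [← prod_mul_prod_compl {i, j}, prod_pair hij, update_of_ne hij, update_self, update_self]
  congr 1
  refine prod_congr rfl fun l hl => ?_
  simp only [mem_compl, mem_insert, mem_singleton, not_or] at hl
  rw [update_of_ne hl.2, update_of_ne hl.1]

noncomputable def averagePair (y : ι → ℝ) (i j : ι) : ι → ℝ :=
  update (update y i ((y i + y j) / 2)) j ((y i + y j) / 2)

lemma averagePair_mem {s : Set ℝ} (hs : Convex ℝ s) {y : ι → ℝ} (hy : ∀ l, y l ∈ s) (i j l : ι) :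
    averagePair y i j l ∈ s := by
  have hmid : (y i + y j) / 2 ∈ s := by
    convert hs (hy i) (hy j) (by norm_num : (0 : ℝ) ≤ 1 / 2) (by norm_num : (0 : ℝ) ≤ 1 / 2)
      (by norm_num) using 1
    simp only [smul_eq_mul]
    ring
  simp only [averagePair, update_apply]
  split_ifs
  exacts [hmid, hmid, hy l]

variable [Fintype ι]

lemma sum_averagePair {i j : ι} (hij : i ≠ j) (y : ι → ℝ) :
    ∑ l, averagePair y i j l = ∑ l, y l := by
  have hy := sum_comp_update_update hij (fun t => t) y (y i) (y j)
  simp only [update_eq_self] at hy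
  rw [averagePair, sum_comp_update_update hij (fun t => t), hy]
  ring

lemma sum_sq_averagePair_lt {i j : ι} (hij : i ≠ j) {y : ι → ℝ} (hne : y i ≠ y j) :
    ∑ l, averagePair y i j l ^ 2 < ∑ l, y l ^ 2 := by
  have hy := sum_comp_update_update hij (· ^ 2) y (y i) (y j)
  simp only [update_eq_self] at hy
  rw [averagePair, sum_comp_update_update hij (· ^ 2), hy]
  have : 0 < (y i - y j) ^ 2 := by
    have := sub_ne_zero.2 hne
    positivity
  nlinarith

theorem le_apply_const_of_le_apply_averagePair {s : Set ℝ} (hs : IsCompact s)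
    (hconv : Convex ℝ s) {f : (ι → ℝ) → ℝ} (hf : Continuous f)
    (havg : ∀ y, (∀ l, y l ∈ s) → ∀ i j, i ≠ j → f y ≤ f (averagePair y i j))
    {x : ι → ℝ} (hx : ∀ l, x l ∈ s) : f x ≤ f fun _ => (∑ l, x l) / Fintype.card ι := by
  set K : Set (ι → ℝ) := Set.univ.pi (fun _ => s) ∩ {y | ∑ l, y l = ∑ l, x l}
  have hK : IsCompact K :=
    (isCompact_univ_pi fun _ => hs).inter_right (isClosed_eq (by fun_prop) continuous_const)
  have hxK : x ∈ K := ⟨Set.mem_univ_pi.2 hx, rfl⟩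
  obtain ⟨z₀, hz₀K, hz₀⟩ := hK.exists_isMaxOn ⟨x, hxK⟩ hf.continuousOn
  obtain ⟨z, ⟨⟨hzs, hzsum : ∑ l, z l = ∑ l, x l⟩, hzmax : f z = f z₀⟩, hzmin⟩ :=
    (hK.inter_right (isClosed_eq hf continuous_const)).exists_isMinOn ⟨z₀, hz₀K, rfl⟩
      (by fun_prop : Continuous fun y : ι → ℝ => ∑ l, y l ^ 2).continuousOn
  rw [Set.mem_univ_pi] at hzs
  have hconst (i j : ι) : z i = z j := by
    by_contra hne
    have hij : i ≠ j := fun h => hne (h ▸ rfl)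
    have hwK : averagePair z i j ∈ K :=
      ⟨Set.mem_univ_pi.2 (averagePair_mem hconv hzs i j), (sum_averagePair hij z).trans hzsum⟩
    have hw : averagePair z i j ∈ K ∩ {y | f y = f z₀} :=
      ⟨hwK, le_antisymm (hz₀ hwK) (hzmax ▸ havg z hzs i j hij)⟩
    exact (hzmin hw).not_gt (sum_sq_averagePair_lt hij hne)
  have hz : z = fun _ => (∑ l, x l) / Fintype.card ι := funext fun l => by
    rw [← hzsum, sum_congr rfl fun i _ => hconst i l, sum_const, card_univ, nsmul_eq_mul,
      mul_div_cancel_left₀ _ (Nat.cast_ne_zero.2 (Fintype.card_pos_iff.2 ⟨l⟩).ne')]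
  rw [← hz, hzmax]
  exact hz₀ hxK

end Averaging

section WittenSum

variable {n : ℕ}

/-- Witten's volume of the moduli space of spherical polygons with side-lengths `x`, divided by
`2 ^ (n - 1) / π`; the summation index `k` of the paper is `k + 1` here. -/
noncomputable def wittenSum (x : Fin n → ℝ) : ℝ :=
  ∑' k : ℕ, (∏ i, sin (((k : ℝ) + 1) * x i)) / ((k : ℝ) + 1) ^ (n - 2)

lemma summable_wittenSum (hn : 4 ≤ n) (x : Fin n → ℝ) :
    Summable fun k : ℕ => (∏ i, sin (((k : ℝ) + 1) * x i)) / ((k : ℝ) + 1) ^ (n - 2) :=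
  .of_norm_bounded (summable_one_div_succ_pow (by omega))
    fun k => norm_div_succ_pow_le (abs_prod_sin_le_one _ _) k _

lemma continuous_wittenSum (hn : 4 ≤ n) : Continuous (wittenSum : (Fin n → ℝ) → ℝ) :=
  continuous_tsum (fun k => by fun_prop) (summable_one_div_succ_pow (by omega))
    fun k x => norm_div_succ_pow_le (abs_prod_sin_le_one _ _) k _

lemma wittenSum_nonneg_four {x : Fin 4 → ℝ} (hx : ∀ i, x i ∈ Set.Icc 0 π) : 0 ≤ wittenSum x := by
  set u := |x 0 - x 1|
  set U := x 0 + x 1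
  set v := |x 2 - x 3|
  set V := x 2 + x 3
  have hU : U ∈ Set.Icc u (2 * π - u) := add_mem_Icc_abs_sub (hx 0) (hx 1)
  have hV : V ∈ Set.Icc v (2 * π - v) := add_mem_Icc_abs_sub (hx 2) (hx 3)
  have hu : 0 ≤ u := abs_nonneg _
  have hv : 0 ≤ v := abs_nonneg _
  have hu' : u ∈ Set.Icc 0 (2 * π) := ⟨hu, by linarith [hU.1, hU.2, pi_pos]⟩
  have hv' : v ∈ Set.Icc 0 (2 * π) := ⟨hv, by linarith [hV.1, hV.2, pi_pos]⟩
  have hU' : U ∈ Set.Icc 0 (2 * π) := ⟨by linarith [hU.1], by linarith [hU.2]⟩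
  have hV' : V ∈ Set.Icc 0 (2 * π) := ⟨by linarith [hV.1], by linarith [hV.2]⟩
  have H := ((((hasSum_cos_mul_cos_div_sq hu' hv').sub (hasSum_cos_mul_cos_div_sq hu' hV')).sub
    (hasSum_cos_mul_cos_div_sq hU' hv')).add (hasSum_cos_mul_cos_div_sq hU' hV')).div_const 4
  rw [wittenSum, tsum_congr fun k => ?_, H.tsum_eq]
  · rw [min_eq_left (show u ≤ 2 * π - u by linarith [hU.1, hU.2]),
      min_eq_left (show v ≤ 2 * π - v by linarith [hV.1, hV.2])]
    have huU : u ≤ min U (2 * π - U) := le_min hU.1 (by linarith [hU.2])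
    have hvV : v ≤ min V (2 * π - V) := le_min hV.1 (by linarith [hV.2])
    have := mul_le_mul_of_nonneg_left (min_add_min_le_min_add_min huU hvV) pi_pos.le
    linarith
  · have hK : (0 : ℝ) ≤ k + 1 := by positivity
    rw [Fin.prod_univ_four, mul_assoc (sin _ * sin _), sin_mul_sin_eq_cos_abs_sub_cos hK,
      sin_mul_sin_eq_cos_abs_sub_cos hK]
    ring

lemma wittenSum_cons_cons {m : ℕ} (hm : 3 ≤ m) (a b : ℝ) (T : Fin m → ℝ) :
    wittenSum (Fin.cons a (Fin.cons b T) : Fin (m + 2) → ℝ) =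
      (∫ θ in |a - b|..a + b, wittenSum (Fin.cons θ T : Fin (m + 1) → ℝ)) / 2 := by
  have H := intervalIntegral.hasSum_integral_of_dominated_convergence (μ := MeasureTheory.volume)
    (a := |a - b|) (b := a + b) (f := fun θ => wittenSum (Fin.cons θ T : Fin (m + 1) → ℝ))
    (F := fun (k : ℕ) (θ : ℝ) => (∏ i, sin (((k : ℝ) + 1) * (Fin.cons θ T : Fin (m + 1) → ℝ) i)) /
      ((k : ℝ) + 1) ^ (m + 1 - 2))
    (fun k _ => 1 / ((k : ℝ) + 1) ^ (m + 1 - 2))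
    (fun k => (by fun_prop : Continuous _).aestronglyMeasurable)
    (fun k => .of_forall fun θ _ => norm_div_succ_pow_le (abs_prod_sin_le_one _ _) k _)
    (.of_forall fun θ _ => summable_one_div_succ_pow (by omega))
    intervalIntegrable_const
    (.of_forall fun θ _ => (summable_wittenSum (by omega) _).hasSum)
  rw [← (H.div_const 2).tsum_eq, wittenSum]
  refine tsum_congr fun k => ?_
  have hK : (0 : ℝ) < k + 1 := by positivity
  simp only [Fin.prod_univ_succ, Fin.cons_zero, Fin.cons_succ, intervalIntegral.integral_div,
    intervalIntegral.integral_mul_const, integral_sin_mul hK.ne', ← mul_assoc,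
    sin_mul_sin_eq_cos_abs_sub_cos hK.le]
  rw [show m + 2 - 2 = (m + 1 - 2) + 1 by omega, pow_succ]
  field_simp

lemma wittenSum_cons_two_pi_sub {m : ℕ} (θ : ℝ) (T : Fin m → ℝ) :
    wittenSum (Fin.cons (2 * π - θ) T : Fin (m + 1) → ℝ) =
      -wittenSum (Fin.cons θ T : Fin (m + 1) → ℝ) := by
  rw [wittenSum, wittenSum, ← tsum_neg]
  refine tsum_congr fun k => ?_
  simp only [Fin.prod_univ_succ, Fin.cons_zero, Fin.cons_succ]
  rw [show ((k : ℝ) + 1) * (2 * π - θ) = (k + 1 : ℕ) * (2 * π) - (k + 1) * θ by push_cast; ring,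
    sin_nat_mul_two_pi_sub]
  ring

theorem wittenSum_nonneg (hn : 4 ≤ n) {x : Fin n → ℝ} (hx : ∀ i, x i ∈ Set.Icc 0 π) :
    0 ≤ wittenSum x := by
  induction n, hn using Nat.le_induction with
  | base => exact wittenSum_nonneg_four hx
  | succ n hn ih =>
    obtain ⟨m, rfl⟩ : ∃ m, n = m + 1 := ⟨n - 1, by omega⟩
    have hx' : x = Fin.cons (x 0) (Fin.cons (x 1) (Fin.tail (Fin.tail x))) := by
      rw [show x 1 = Fin.tail x 0 from rfl, Fin.cons_self_tail, Fin.cons_self_tail]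
    have hab := add_mem_Icc_abs_sub (hx 0) (hx 1)
    rw [hx', wittenSum_cons_cons (by omega)]
    refine div_nonneg (integral_nonneg_of_odd_about ((continuous_wittenSum hn).comp (by fun_prop))
      (fun θ => wittenSum_cons_two_pi_sub θ _) (fun θ hθ => ih fun i => ?_) hab.1
      (by linarith [hab.2])) zero_le_two
    exact Fin.cases ⟨(abs_nonneg _).trans hθ.1, hθ.2⟩ (fun j => hx _) i

lemma wittenSum_averagePair (hn : 4 ≤ n) (z : Fin n → ℝ) {i j : Fin n} (hij : i ≠ j) :
    wittenSum (averagePair z i j) = wittenSum z +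
      wittenSum (Function.update (Function.update z i (|z i - z j| / 2)) j (|z i - z j| / 2)) := by
  rw [wittenSum, wittenSum, wittenSum,
    ← (summable_wittenSum hn z).tsum_add (summable_wittenSum hn _)]
  refine tsum_congr fun k => ?_
  have hK : (0 : ℝ) ≤ k + 1 := by positivity
  have hz := prod_comp_update_update hij (fun t => sin (((k : ℝ) + 1) * t)) z (z i) (z j)
  simp only [Function.update_eq_self] at hz
  rw [averagePair, prod_comp_update_update hij (fun t => sin (((k : ℝ) + 1) * t)),
    prod_comp_update_update hij (fun t => sin (((k : ℝ) + 1) * t)), hz]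
  simp only [sin_mul_sin_eq_cos_abs_sub_cos hK, sub_self, abs_zero, mul_zero, cos_zero,
    add_halves]
  ring

lemma wittenSum_le_wittenSum_averagePair (hn : 4 ≤ n) {z : Fin n → ℝ}
    (hz : ∀ l, z l ∈ Set.Icc 0 π) {i j : Fin n} (hij : i ≠ j) :
    wittenSum z ≤ wittenSum (averagePair z i j) := by
  rw [wittenSum_averagePair hn z hij, le_add_iff_nonneg_right]
  refine wittenSum_nonneg hn fun l => ?_
  have hd : |z i - z j| / 2 ∈ Set.Icc 0 π := by
    have hmem := add_mem_Icc_abs_sub (hz i) (hz j)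
    constructor <;> linarith [abs_nonneg (z i - z j), hmem.1, hmem.2]
  simp only [Function.update_apply]
  split_ifs
  exacts [hd, hd, hz l]

end WittenSum

theorem regular_maximizes_fixed_perimeter_general (n : ℕ) (hn : 4 ≤ n) (P : ℝ) (x : Fin n → ℝ)
    (hx : ∀ i, 0 < x i ∧ x i < π) (hsum : ∑ i, x i = P) :
    ∑' k : ℕ, (∏ i, Real.sin (((k : ℝ) + 1) * x i)) / ((k : ℝ) + 1) ^ (n - 2) ≤
      ∑' k : ℕ, (Real.sin (((k : ℝ) + 1) * P / n)) ^ n / ((k : ℝ) + 1) ^ (n - 2) := by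
  have h := le_apply_const_of_le_apply_averagePair isCompact_Icc (convex_Icc 0 π)
    (continuous_wittenSum hn) (fun y hy i j hij => wittenSum_le_wittenSum_averagePair hn hy hij)
    (fun i => Set.Ioo_subset_Icc_self (hx i))
  simpa only [wittenSum, hsum, Fintype.card_fin, prod_const, card_univ, mul_div_assoc] using h

theorem regular_maximizes_fixed_perimeter (n : ℕ) (hn : 4 ≤ n) (P : ℝ)
    (hP : 0 < P) (hP' : P < n * π) (x : Fin n → ℝ)
    (hx : ∀ i, 0 < x i ∧ x i < π) (hsum : ∑ i, x i = P) :
    ∑' k : ℕ, (∏ i, Real.sin (((k : ℝ) + 1) * x i)) / ((k : ℝ) + 1) ^ (n - 2) ≤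
      ∑' k : ℕ, (Real.sin (((k : ℝ) + 1) * P / n)) ^ n / ((k : ℝ) + 1) ^ (n - 2) :=
  regular_maximizes_fixed_perimeter_general n hn P x hx hsum
end

section
/- Let r_1, r_2, r_3 be real numbers with 0 < r_i < π for all i, satisfying the strict triangle inequalities r_1 < r_2 + r_3, r_2 < r_1 + r_3, r_3 < r_1 + r_2, and r_1 + r_2 + r_3 < 2π. Then the partial sums Σ_{k=1}^{N} sin(k r_1)·sin(k r_2)·sin(k r_3)/k converge to π/4 as N → ∞. Equivalently, the symplectic volume (4/π)·Σ_{k=1}^∞ sin(k r_1) sin(k r_2) sin(k r_3)/k of the moduli space of spherical triangles with side-lengths (r_1, r_2, r_3) equals 1, regardless of the side-lengths (subject to these non-degeneracy conditions). -/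
/-!
Product-to-sum turns `4 sin(k r₁) sin(k r₂) sin(k r₃)` into
`sin(k(-r₁+r₂+r₃)) + sin(k(r₁-r₂+r₃)) + sin(k(r₁+r₂-r₃)) - sin(k(r₁+r₂+r₃))`, and the
triangle inequalities together with `r₁ + r₂ + r₃ < 2π` put all four angles in `(0, 2π)`,
where the sawtooth series `∑ sin(k x)/k` converges to `(π - x)/2`; the four limits add up
to `π`.

The sawtooth series is the imaginary part of `∑ wᵏ/k` at `w = exp(i x)`. This series
converges on the closed unit disc minus `1` by Dirichlet's test, and Abel's limit theorem
identifies its sum with `-log(1 - w)`, whose imaginary part is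
`-arg(1 - exp(i x)) = (π - x)/2`.
-/

open Real Filter Topology Finset

namespace Complex

lemma norm_geom_sum_le {w : ℂ} (hw : ‖w‖ ≤ 1) (hw1 : w ≠ 1) (n : ℕ) :
    ‖∑ i ∈ range n, w ^ i‖ ≤ 2 / ‖w - 1‖ := by
  rw [geom_sum_eq hw1, norm_div]
  gcongr
  calc ‖w ^ n - 1‖ ≤ ‖w‖ ^ n + 1 := by
        simpa [norm_pow] using norm_sub_le (w ^ n) 1
    _ ≤ 2 := by linarith [pow_le_one₀ (norm_nonneg w) hw (n := n)]

lemma one_sub_mem_slitPlane {w : ℂ} (hw : ‖w‖ ≤ 1) (hw1 : w ≠ 1) : 1 - w ∈ slitPlane := by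
  refine mem_slitPlane_iff.2 (Or.inl ?_)
  rw [sub_re, one_re, sub_pos]
  by_contra! h
  have hre : w.re = 1 := by linarith [re_le_norm w]
  have him : w.im = 0 := abs_re_eq_norm.1 (by rw [hre, abs_one]; linarith [re_le_norm w])
  exact hw1 (ext hre him)

lemma cauchySeq_sum_pow_succ_div {w : ℂ} (hw : ‖w‖ ≤ 1) (hw1 : w ≠ 1) :
    CauchySeq fun N : ℕ => ∑ n ∈ range N, w ^ (n + 1) / (n + 1) := by
  have hanti : Antitone fun n : ℕ => ((n : ℝ) + 1)⁻¹ := fun a b hab =>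
    inv_anti₀ (by positivity) (by gcongr)
  have hbdd (n : ℕ) : ‖∑ i ∈ range n, w ^ (i + 1)‖ ≤ 2 / ‖w - 1‖ := by
    simp_rw [pow_succ, ← sum_mul, norm_mul]
    exact mul_le_of_le_one_right (norm_nonneg _) hw |>.trans (norm_geom_sum_le hw hw1 n)
  convert hanti.cauchySeq_series_mul_of_tendsto_zero_of_bounded
    (by simpa only [one_div] using tendsto_one_div_add_atTop_nhds_zero_nat (𝕜 := ℝ)) hbdd
    using 3
  rw [real_smul, div_eq_inv_mul]
  push_cast
  rfl

lemma tendsto_sum_pow_succ_div {w : ℂ} (hw : ‖w‖ ≤ 1) (hw1 : w ≠ 1) :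
    Tendsto (fun N : ℕ => ∑ n ∈ range N, w ^ (n + 1) / (n + 1)) atTop
      (𝓝 (-log (1 - w))) := by
  obtain ⟨l, hl⟩ := cauchySeq_tendsto_of_complete (cauchySeq_sum_pow_succ_div hw hw1)
  suffices l = -log (1 - w) from this ▸ hl
  -- the unshifted series has the junk term `w ^ 0 / 0 = 0` in front
  have hsum : Tendsto (fun N : ℕ => ∑ n ∈ range N, w ^ n / n) atTop (𝓝 l) := by
    rw [← tendsto_add_atTop_iff_nat 1]
    simpa [sum_range_succ'] using hl
  have habel := tendsto_map'_iff.1 (tendsto_tsum_powerSeries_nhdsWithin_lt hsum)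
  have hlog : ContinuousAt (fun r : ℝ => -log (1 - r * w)) 1 :=
    (ContinuousAt.clog (by fun_prop) (by simpa using one_sub_mem_slitPlane hw hw1)).neg
  have hlim := hlog.tendsto.mono_left (nhdsWithin_le_nhds (s := Set.Iio 1))
  simp only [ofReal_one, one_mul] at hlim
  refine tendsto_nhds_unique habel (hlim.congr' ?_)
  filter_upwards [Ioo_mem_nhdsLT (zero_lt_one' ℝ)] with r hr
  have hrw : ‖(r : ℂ) * w‖ < 1 := by
    rw [norm_mul, norm_real, Real.norm_of_nonneg hr.1.le]
    nlinarith [hr.1, hr.2, norm_nonneg w]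
  refine (hasSum_taylorSeries_neg_log hrw).tsum_eq.symm.trans (tsum_congr fun n => ?_)
  ring

lemma arg_one_sub_exp_mul_I {x : ℝ} (hx₀ : 0 < x) (hx : x < 2 * π) :
    arg (1 - exp (x * I)) = x / 2 - π / 2 := by
  have hsin : 0 < Real.sin (x / 2) := sin_pos_of_pos_of_lt_pi (by linarith) (by linarith)
  have hx2 : x = 2 * (x / 2) := by ring
  have hpolar : 1 - exp (x * I) = ((2 * Real.sin (x / 2) : ℝ) : ℂ) *
      (cos (x / 2 - π / 2 : ℝ) + sin (x / 2 - π / 2 : ℝ) * I) := by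
    have hcos : Real.cos x = 1 - 2 * Real.sin (x / 2) ^ 2 := by
      nth_rw 1 [hx2, Real.cos_two_mul', Real.cos_sq']
      ring
    have hsin2 : Real.sin x = 2 * Real.sin (x / 2) * Real.cos (x / 2) := by
      nth_rw 1 [hx2, Real.sin_two_mul]
    rw [exp_mul_I, ← ofReal_cos, ← ofReal_sin, ← ofReal_cos, ← ofReal_sin,
      Real.cos_sub_pi_div_two, Real.sin_sub_pi_div_two, hcos, hsin2]
    push_cast
    ring
  rw [hpolar, arg_real_mul _ (by positivity), arg_cos_add_sin_mul_I ⟨by linarith, by linarith⟩]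

end Complex

namespace Real

open Complex in
theorem tendsto_sum_sin_succ_mul_div {x : ℝ} (hx₀ : 0 < x) (hx : x < 2 * π) :
    Tendsto (fun N : ℕ => ∑ k ∈ range N, Real.sin ((k + 1) * x) / (k + 1)) atTop
      (𝓝 ((π - x) / 2)) := by
  have hw1 : cexp (x * I) ≠ 1 := fun h => by
    have hcos := congrArg re h
    rw [exp_ofReal_mul_I_re, one_re, cos_eq_one_iff_of_lt_of_lt (by linarith) hx] at hcos
    exact hx₀.ne' hcos
  have him := (continuous_im.tendsto _).comp
    (tendsto_sum_pow_succ_div (norm_exp_ofReal_mul_I x).le hw1)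
  rw [Function.comp_def, neg_im, log_im, arg_one_sub_exp_mul_I hx₀ hx] at him
  convert him using 2 with N
  · rw [im_sum]
    refine sum_congr rfl fun k _ => ?_
    have hpow : cexp (x * I) ^ (k + 1) = cexp (((k + 1) * x : ℝ) * I) := by
      rw [← Complex.exp_nat_mul]; push_cast; ring_nf
    rw [hpow, show ((k : ℂ) + 1) = ((k + 1 : ℝ) : ℂ) by push_cast; rfl, div_ofReal_im,
      exp_ofReal_mul_I_im]
  · ring

theorem four_mul_sin_mul_sin_mul_sin (a b c : ℝ) :
    4 * (sin a * sin b * sin c) =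
      sin (-a + b + c) + sin (a - b + c) + sin (a + b - c) - sin (a + b + c) := by
  simp only [sin_add, sin_sub, cos_add, cos_sub, sin_neg, cos_neg]
  ring

end Real

theorem triangle_volume_const_general (r₁ r₂ r₃ : ℝ)
    (t₁ : r₁ < r₂ + r₃) (t₂ : r₂ < r₁ + r₃) (t₃ : r₃ < r₁ + r₂)
    (hsum : r₁ + r₂ + r₃ < 2 * π) :
    Filter.Tendsto
      (fun N : ℕ => ∑ k ∈ Finset.range N,
        Real.sin (((k : ℝ) + 1) * r₁) * Real.sin (((k : ℝ) + 1) * r₂) *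
          Real.sin (((k : ℝ) + 1) * r₃) / ((k : ℝ) + 1))
      Filter.atTop (nhds (π / 4)) := by
  have H := ((((tendsto_sum_sin_succ_mul_div (x := -r₁ + r₂ + r₃) (by linarith) (by linarith)).add
    (tendsto_sum_sin_succ_mul_div (x := r₁ - r₂ + r₃) (by linarith) (by linarith))).add
    (tendsto_sum_sin_succ_mul_div (x := r₁ + r₂ - r₃) (by linarith) (by linarith))).sub
    (tendsto_sum_sin_succ_mul_div (x := r₁ + r₂ + r₃) (by linarith) hsum)).div_const 4
  convert H using 1
  · funext N
    simp only [← sum_add_distrib, ← sum_sub_distrib, sum_div]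
    refine sum_congr rfl fun k _ => ?_
    have h4 := four_mul_sin_mul_sin_mul_sin ((k + 1) * r₁) ((k + 1) * r₂) ((k + 1) * r₃)
    field_simp
    ring_nf at h4 ⊢
    linear_combination h4
  · congr 1
    ring

theorem triangle_volume_const (r₁ r₂ r₃ : ℝ)
    (h₁ : 0 < r₁ ∧ r₁ < π) (h₂ : 0 < r₂ ∧ r₂ < π) (h₃ : 0 < r₃ ∧ r₃ < π)
    (t₁ : r₁ < r₂ + r₃) (t₂ : r₂ < r₁ + r₃) (t₃ : r₃ < r₁ + r₂)
    (hsum : r₁ + r₂ + r₃ < 2 * π) :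
    Filter.Tendsto
      (fun N : ℕ => ∑ k ∈ Finset.range N,
        Real.sin (((k : ℝ) + 1) * r₁) * Real.sin (((k : ℝ) + 1) * r₂) *
          Real.sin (((k : ℝ) + 1) * r₃) / ((k : ℝ) + 1))
      Filter.atTop (nhds (π / 4)) :=
  triangle_volume_const_general r₁ r₂ r₃ t₁ t₂ t₃ hsum
end

section
/- There exists ε_0 > 0 such that for all ε with 0 < ε < ε_0, Σ_{k=1}^∞ sin(k(4π/5 + ε))·sin(k(4π/5 − ε))·(sin(4kπ/5))^3/k^3 = Σ_{k=1}^∞ (sin(4kπ/5))^5/k^3. That is, for a pentagon with perimeter 4π, the regular pentagon with all side-lengths 4π/5 is not the unique maximizer of the symplectic volume among pentagons with that perimeter: perturbing two sides to 4π/5 ± ε leaves the volume unchanged. -/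
/-!
On `[0, 2π]` the series `∑ sin (kθ) / k³` is the cubic `Sl₃(θ) = θ(π - θ)(2π - θ)/12`. Since
`sin (x + e) sin (x - e) = sin² x - sin² e`, the two sides differ by `∑ sin² (kε) sin³ (kα) / k³`
with `α = 4π/5`. Expanding `sin² (kε) sin (kθ)` into sines of `kθ` and `k(θ ± 2ε)` makes
`∑ sin² (kε) sin (kθ) / k³` a second difference of `Sl₃`, namely `(π - θ) ε² / 2`. With
`sin³ x = (3 sin x - sin 3x) / 4` and `sin (3kα) = sin (k(3α - 2π))`, the difference becomes
`(3(π - α) - (π - (3α - 2π))) ε² / 8 = 0`, valid as long as all angles stay in `[0, 2π]`.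
-/

open Real

theorem sin_add_mul_sin_sub (x y : ℝ) : sin (x + y) * sin (x - y) = sin x ^ 2 - sin y ^ 2 := by
  simp only [sin_add, sin_sub]
  linear_combination (-sin y ^ 2) * sin_sq_add_cos_sq x + sin x ^ 2 * sin_sq_add_cos_sq y

theorem sin_sq_mul_sin (x y : ℝ) :
    sin x ^ 2 * sin y = (2 * sin y - sin (y + 2 * x) - sin (y - 2 * x)) / 4 := by
  simp only [sin_add, sin_sub, sin_two_mul, cos_two_mul]
  linear_combination sin y * sin_sq_add_cos_sq x

theorem sin_pow_three (x : ℝ) : sin x ^ 3 = (3 * sin x - sin (3 * x)) / 4 := by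
  rw [sin_three_mul]; ring

theorem bernoulli_three_aeval (x : ℝ) :
    (Polynomial.bernoulli 3).aeval x = x ^ 3 - 3 / 2 * x ^ 2 + 1 / 2 * x := by
  simp [Polynomial.bernoulli, Finset.sum_range_succ]
  norm_num [bernoulli, bernoulli'_two, bernoulli'_three]
  ring

noncomputable def clausenSl3 (θ : ℝ) : ℝ := θ * (π - θ) * (2 * π - θ) / 12

theorem hasSum_sin_div_cube {θ : ℝ} (h₀ : 0 ≤ θ) (h₁ : θ ≤ 2 * π) :
    HasSum (fun k : ℕ => sin (((k : ℝ) + 1) * θ) / ((k : ℝ) + 1) ^ 3) (clausenSl3 θ) := by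
  have hx : θ / (2 * π) ∈ Set.Icc (0 : ℝ) 1 :=
    ⟨by positivity, (div_le_one (by positivity)).mpr h₁⟩
  have H := (hasSum_nat_add_iff' 1).mpr (hasSum_one_div_nat_pow_mul_sin one_ne_zero hx)
  norm_num [bernoulli_three_aeval] at H
  -- `H` carries the `AddCommGroup`-derived `AddCommMonoid ℝ` instance, defeq only at instance level.
  convert (preTransparency := .instances) H using 1
  · funext k
    rw [show 2 * π * ((k : ℝ) + 1) * (θ / (2 * π)) = ((k : ℝ) + 1) * θ by field_simp]
    ring
  · unfold clausenSl3
    field_simp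
    ring

theorem hasSum_sin_sq_mul_sin_div_cube {θ ε : ℝ} (h₀ : 2 * |ε| ≤ θ) (h₁ : θ ≤ 2 * π - 2 * |ε|) :
    HasSum (fun k : ℕ => sin (((k : ℝ) + 1) * ε) ^ 2 * sin (((k : ℝ) + 1) * θ) / ((k : ℝ) + 1) ^ 3)
      ((π - θ) * ε ^ 2 / 2) := by
  have hε := le_abs_self ε
  have hε' := neg_abs_le ε
  have hθ := hasSum_sin_div_cube (by linarith) (by linarith : θ ≤ 2 * π)
  have hplus := hasSum_sin_div_cube (θ := θ + 2 * ε) (by linarith) (by linarith)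
  have hminus := hasSum_sin_div_cube (θ := θ - 2 * ε) (by linarith) (by linarith)
  rw [show (π - θ) * ε ^ 2 / 2 =
      (2 * clausenSl3 θ - clausenSl3 (θ + 2 * ε) - clausenSl3 (θ - 2 * ε)) / 4 by
    unfold clausenSl3; ring]
  refine (((hθ.mul_left 2).sub hplus).sub hminus).div_const 4 |>.congr_fun fun k => ?_
  rw [sin_sq_mul_sin, mul_add, mul_sub, mul_left_comm _ 2 ε]
  ring

theorem hasSum_sin_sq_mul_sin_pow_three_div_cube_eq_zero {α ε : ℝ}
    (h₀ : 2 * π + 2 * |ε| ≤ 3 * α) (h₁ : 3 * α ≤ 4 * π - 2 * |ε|) :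
    HasSum (fun k : ℕ =>
      sin (((k : ℝ) + 1) * ε) ^ 2 * sin (((k : ℝ) + 1) * α) ^ 3 / ((k : ℝ) + 1) ^ 3) 0 := by
  have hα := hasSum_sin_sq_mul_sin_div_cube (θ := α) (ε := ε) (by linarith) (by linarith)
  have h3α := hasSum_sin_sq_mul_sin_div_cube (θ := 3 * α - 2 * π) (ε := ε)
    (by linarith) (by linarith)
  rw [show (0 : ℝ) = (3 * ((π - α) * ε ^ 2 / 2) - (π - (3 * α - 2 * π)) * ε ^ 2 / 2) / 4 by ring]
  refine ((hα.mul_left 3).sub h3α).div_const 4 |>.congr_fun fun k => ?_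
  have hshift : sin (((k : ℝ) + 1) * (3 * α - 2 * π)) = sin (3 * (((k : ℝ) + 1) * α)) := by
    rw [show ((k : ℝ) + 1) * (3 * α - 2 * π) = 3 * (((k : ℝ) + 1) * α) - (k + 1 : ℕ) * (2 * π) by
      push_cast; ring, sin_sub_nat_mul_two_pi]
  rw [sin_pow_three, hshift]
  ring

theorem summable_sin_pow_div_cube (n : ℕ) (θ : ℝ) :
    Summable fun k : ℕ => sin (((k : ℝ) + 1) * θ) ^ n / ((k : ℝ) + 1) ^ 3 := by
  refine ((summable_nat_add_iff 1).mpr (summable_one_div_nat_pow (p := 3).mpr (by norm_num)))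
    |>.of_norm_bounded fun k => ?_
  rw [Real.norm_eq_abs, abs_div, abs_pow, abs_of_pos (by positivity : (0 : ℝ) < ((k : ℝ) + 1) ^ 3)]
  push_cast
  gcongr
  exact pow_le_one₀ (abs_nonneg _) (abs_sin_le_one _)

theorem pentagon_not_unique_max :
    ∃ ε₀ > 0, ∀ ε : ℝ, 0 < ε → ε < ε₀ →
      ∑' k : ℕ, Real.sin (((k : ℝ) + 1) * (4 * π / 5 + ε)) *
          Real.sin (((k : ℝ) + 1) * (4 * π / 5 - ε)) *
          (Real.sin (((k : ℝ) + 1) * (4 * π / 5))) ^ 3 / ((k : ℝ) + 1) ^ 3 =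
      ∑' k : ℕ, (Real.sin (((k : ℝ) + 1) * (4 * π / 5))) ^ 5 / ((k : ℝ) + 1) ^ 3 := by
  refine ⟨π / 5, by positivity, fun ε hε hε₀ => ?_⟩
  have hvanish := hasSum_sin_sq_mul_sin_pow_three_div_cube_eq_zero (α := 4 * π / 5) (ε := ε)
    (by rw [abs_of_pos hε]; linarith) (by rw [abs_of_pos hε]; linarith [pi_pos])
  calc _ = ∑' k : ℕ, (sin (((k : ℝ) + 1) * (4 * π / 5)) ^ 5 / ((k : ℝ) + 1) ^ 3 -
          sin (((k : ℝ) + 1) * ε) ^ 2 * sin (((k : ℝ) + 1) * (4 * π / 5)) ^ 3 / ((k : ℝ) + 1) ^ 3) :=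
        tsum_congr fun k => by
          rw [mul_add, mul_sub, sin_add_mul_sin_sub]
          ring
    _ = _ := by
      rw [(summable_sin_pow_div_cube 5 _).tsum_sub hvanish.summable, hvanish.tsum_eq, sub_zero]
end
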